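/- arXiv:1201.1513 — 3 statements merged into one kernel-verified Lean document; each statement's English description precedes it below -/
import Mathlib

section
/- Let T be a nondegenerate triangle with vertices x₁, x₂, x₃ and barycentric coordinates λ₁, λ₂, λ₃. For indices {i,j,k} = {1,2,3}, define the edge bubble vector field ψₖ = 6 λᵢ λⱼ (xⱼ − xᵢ) and the Whitney form φₖ = λᵢ ∇λⱼ − λⱼ ∇λᵢ. Then ∫_T ψₖ · φₖ dx = (2/5)|T| for each k. -/
open MeasureTheory Set
open scoped RealInnerProductSpace

/-!
The triangle `T` is the image of the reference triangle `{u | 0 ≤ u₀, 0 ≤ u₁, u₀ + u₁ ≤ 1}` under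
the affine chart `u ↦ u₀ (xᵢ - xₖ) + u₁ (xⱼ - xₖ) + xₖ`, which pulls `λᵢ, λⱼ` back to `u₀, u₁`.
Since `⟪xⱼ - xᵢ, ∇λⱼ⟫ = 1` and `⟪xⱼ - xᵢ, ∇λᵢ⟫ = -1`, the integrand is `6 λᵢ λⱼ (λᵢ + λⱼ)`, so
the affine change of variables turns both sides into `|det|` times an integral over the reference
triangle: `∫ 6 u₀ u₁ (u₀ + u₁) = 1/5` and area `1/2`.
-/

section AffineChangeOfVariables

variable {E F : Type*} [NormedAddCommGroup E] [NormedSpace ℝ E] [FiniteDimensional ℝ E]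
  [MeasurableSpace E] [BorelSpace E] (μ : Measure E) [μ.IsAddHaarMeasure]
  [NormedAddCommGroup F] [NormedSpace ℝ F]

theorem AffineMap.setIntegral_image (f : E →ᵃ[ℝ] E) {s : Set E} (hs : MeasurableSet s)
    (hf : InjOn f s) (g : E → F) :
    ∫ x in f '' s, g x ∂μ = |LinearMap.det f.linear| • ∫ x in s, g (f x) ∂μ := by
  have hf' (x : E) (_ : x ∈ s) : HasFDerivWithinAt f f.linear.toContinuousLinearMap s x := by
    rw [f.decomp]
    exact (f.linear.toContinuousLinearMap.hasFDerivAt.add_const (f 0)).hasFDerivWithinAt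
  rw [integral_image_eq_integral_abs_det_fderiv_smul μ hs hf' hf,
    LinearMap.det_toContinuousLinearMap, integral_smul]

theorem AffineMap.measureReal_image (f : E →ᵃ[ℝ] E) {s : Set E} (hs : MeasurableSet s)
    (hf : InjOn f s) : μ.real (f '' s) = |LinearMap.det f.linear| * μ.real s := by
  simpa using f.setIntegral_image μ hs hf (fun _ => (1 : ℝ))

end AffineChangeOfVariables

def unitTriangle : Set (ℝ × ℝ) := {p | 0 ≤ p.1 ∧ 0 ≤ p.2 ∧ p.1 + p.2 ≤ 1}

theorem isClosed_unitTriangle : IsClosed unitTriangle :=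
  (isClosed_le continuous_const continuous_fst).inter <|
    (isClosed_le continuous_const continuous_snd).inter <|
      isClosed_le (continuous_fst.add continuous_snd) continuous_const

theorem isCompact_unitTriangle : IsCompact unitTriangle :=
  (isCompact_Icc (a := ((0 : ℝ), (0 : ℝ))) (b := (1, 1))).of_isClosed_subset
    isClosed_unitTriangle fun _ ⟨h₁, h₂, h₃⟩ => ⟨⟨h₁, h₂⟩, ⟨by linarith, by linarith⟩⟩

theorem setIntegral_unitTriangle {F : ℝ × ℝ → ℝ} (hF : Continuous F) :
    ∫ p in unitTriangle, F p = ∫ a in (0)..1, ∫ b in (0)..(1 - a), F (a, b) := by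
  have hT := isClosed_unitTriangle.measurableSet
  have hint : Integrable (unitTriangle.indicator F) :=
    (integrable_indicator_iff hT).2 (hF.continuousOn.integrableOn_compact isCompact_unitTriangle)
  have hsection (a : ℝ) : ∫ b, unitTriangle.indicator F (a, b) =
      (Icc 0 1).indicator (fun a => ∫ b in (0)..(1 - a), F (a, b)) a := by
    by_cases ha : a ∈ Icc (0 : ℝ) 1
    · rw [indicator_of_mem ha, intervalIntegral.integral_of_le (by linarith [ha.2]),
        ← integral_Icc_eq_integral_Ioc, ← integral_indicator measurableSet_Icc]
      congr 1 with b
      simp only [indicator_apply, unitTriangle, mem_ofPred_eq, mem_Icc]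
      congr 1
      exact propext ⟨fun h => ⟨h.2.1, by linarith [h.2.2]⟩,
        fun h => ⟨ha.1, h.1, by linarith [h.2]⟩⟩
    · rw [indicator_of_notMem ha]
      refine integral_eq_zero_of_ae (Filter.Eventually.of_forall fun b => ?_)
      exact indicator_of_notMem (fun h => ha ⟨h.1, by linarith [h.2.1, h.2.2]⟩) _
  rw [← integral_indicator hT, Measure.volume_eq_prod, integral_prod _ hint]
  simp_rw [hsection]
  rw [integral_indicator measurableSet_Icc, integral_Icc_eq_integral_Ioc,
    ← intervalIntegral.integral_of_le zero_le_one]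

theorem measureReal_unitTriangle : volume.real unitTriangle = 1 / 2 := by
  have h := setIntegral_unitTriangle (F := fun _ => (1 : ℝ)) continuous_const
  simp only [integral_const, measureReal_restrict_apply_univ, smul_eq_mul, mul_one,
    intervalIntegral.integral_const, sub_zero] at h
  rw [h, intervalIntegral.integral_eq_sub_of_hasDerivAt (f := fun a : ℝ => a - a ^ 2 / 2)
    (fun a _ => ((hasDerivAt_id a).sub ((hasDerivAt_pow 2 a).div_const 2)).congr_deriv (by simp))
    (by apply Continuous.intervalIntegrable; fun_prop)]
  norm_num

theorem integral_unitTriangle_mul_mul_add :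
    ∫ p in unitTriangle, 6 * p.1 * p.2 * (p.1 + p.2) = 1 / 5 := by
  have hinner (a : ℝ) : ∫ b in (0)..(1 - a), 6 * a * b * (a + b) =
      3 * a ^ 2 * (1 - a) ^ 2 + 2 * a * (1 - a) ^ 3 := by
    rw [intervalIntegral.integral_eq_sub_of_hasDerivAt
      (f := fun b => 3 * a ^ 2 * b ^ 2 + 2 * a * b ^ 3)
      (fun b _ => (((hasDerivAt_pow 2 b).const_mul (3 * a ^ 2)).add
          ((hasDerivAt_pow 3 b).const_mul (2 * a))).congr_deriv (by norm_num; ring))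
      (by apply Continuous.intervalIntegrable; fun_prop)]
    ring
  rw [setIntegral_unitTriangle (by fun_prop)]
  simp_rw [hinner]
  rw [intervalIntegral.integral_eq_sub_of_hasDerivAt (f := fun a : ℝ => a ^ 5 / 5 - a ^ 3 + a ^ 2)
    (fun a _ => ((((hasDerivAt_pow 5 a).div_const 5).sub (hasDerivAt_pow 3 a)).add
        (hasDerivAt_pow 2 a)).congr_deriv (by norm_num; ring))
    (by apply Continuous.intervalIntegrable; fun_prop)]
  norm_num

def refTriangle : Set (EuclideanSpace ℝ (Fin 2)) := {u | 0 ≤ u 0 ∧ 0 ≤ u 1 ∧ u 0 + u 1 ≤ 1}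

theorem convex_refTriangle : Convex ℝ refTriangle := by
  rintro u ⟨hu₀, hu₁, hu⟩ v ⟨hv₀, hv₁, hv⟩ s t hs ht hst
  simp only [refTriangle, mem_ofPred_eq, PiLp.add_apply, PiLp.smul_apply, smul_eq_mul]
  exact ⟨by positivity, by positivity, by nlinarith⟩

theorem measurePreserving_toLp_symm_trans_finTwoArrow :
    MeasurePreserving ((MeasurableEquiv.toLp 2 (Fin 2 → ℝ)).symm.trans
      MeasurableEquiv.finTwoArrow) :=
  (volume_preserving_finTwoArrow ℝ).comp
    (EuclideanSpace.volume_preserving_symm_measurableEquiv_toLp (Fin 2))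

theorem measurableSet_refTriangle : MeasurableSet refTriangle :=
  isClosed_unitTriangle.measurableSet.preimage
    measurePreserving_toLp_symm_trans_finTwoArrow.measurable

theorem measureReal_refTriangle : volume.real refTriangle = 1 / 2 := by
  rw [← measureReal_unitTriangle]
  exact measurePreserving_toLp_symm_trans_finTwoArrow.measureReal_preimage
    isClosed_unitTriangle.measurableSet.nullMeasurableSet

theorem integral_refTriangle_mul_mul_add :
    ∫ u in refTriangle, 6 * u 0 * u 1 * (u 0 + u 1) = 1 / 5 :=
  (measurePreserving_toLp_symm_trans_finTwoArrow.setIntegral_preimage_emb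
    (MeasurableEquiv.measurableEmbedding _) (fun p => 6 * p.1 * p.2 * (p.1 + p.2))
    unitTriangle).trans integral_unitTriangle_mul_mul_add

section TriangleChart

variable {E : Type*} [AddCommGroup E] [Module ℝ E]

noncomputable def triangleChart (a b c : E) : EuclideanSpace ℝ (Fin 2) →ᵃ[ℝ] E :=
  ((EuclideanSpace.proj 0 : EuclideanSpace ℝ (Fin 2) →L[ℝ] ℝ).toLinearMap.smulRight (a - c) +
    (EuclideanSpace.proj 1 : EuclideanSpace ℝ (Fin 2) →L[ℝ] ℝ).toLinearMap.smulRight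
      (b - c)).toAffineMap + AffineMap.const ℝ _ c

@[simp]
theorem triangleChart_apply (a b c : E) (u : EuclideanSpace ℝ (Fin 2)) :
    triangleChart a b c u = u 0 • (a - c) + u 1 • (b - c) + c := rfl

theorem AffineMap.comp_triangleChart {F : Type*} [AddCommGroup F] [Module ℝ F]
    (φ : E →ᵃ[ℝ] F) (a b c : E) :
    φ.comp (triangleChart a b c) = triangleChart (φ a) (φ b) (φ c) := by
  ext u
  have h := φ.map_vadd c (u 0 • (a - c) + u 1 • (b - c))
  simp only [vadd_eq_add, map_add, map_smul, ← vsub_eq_sub, φ.linearMap_vsub] at h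
  simpa using h

theorem image_triangleChart_refTriangle (a b c : E) :
    triangleChart a b c '' refTriangle = convexHull ℝ {a, b, c} := by
  apply Subset.antisymm
  · rintro _ ⟨u, ⟨h₀, h₁, h⟩, rfl⟩
    have hmem := (convex_convexHull ℝ ({a, b, c} : Set E)).sum_mem (t := Finset.univ)
      (w := ![u 0, u 1, 1 - u 0 - u 1]) (z := ![a, b, c])
      (by intro m _; fin_cases m <;> simp <;> linarith)
      (by simp [Fin.sum_univ_three])
      (by intro m _; fin_cases m <;> exact subset_convexHull ℝ _ (by simp))
    convert hmem using 1
    simp [Fin.sum_univ_three]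
    module
  · refine convexHull_min ?_ (convex_refTriangle.affine_image _)
    rintro p (rfl | rfl | rfl)
    · exact ⟨!₂[1, 0], by simp [refTriangle], by simp⟩
    · exact ⟨!₂[0, 1], by simp [refTriangle], by simp⟩
    · exact ⟨0, by simp [refTriangle], by simp⟩

end TriangleChart

theorem range_fin_three_eq_of_ne {α : Type*} (x : Fin 3 → α) {i j k : Fin 3} (hij : i ≠ j)
    (hik : i ≠ k) (hjk : j ≠ k) : range x = {x i, x j, x k} := by
  have hcases (m : Fin 3) : m = i ∨ m = j ∨ m = k := by omega
  ext p
  constructor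
  · rintro ⟨m, rfl⟩
    rcases hcases m with rfl | rfl | rfl <;> simp
  · rintro (rfl | rfl | rfl) <;> exact mem_range_self _

theorem inner_sub_eq_sub_of_eq_add_inner {V : Type*} [NormedAddCommGroup V]
    [InnerProductSpace ℝ V] {φ : V → ℝ} {g : V} (hφ : ∀ p, φ p = φ 0 + ⟪g, p⟫) (p q : V) :
    ⟪q - p, g⟫ = φ q - φ p := by
  rw [real_inner_comm, inner_sub_right, hφ p, hφ q]
  ring

theorem edge_bubble_whitney_diagonal_general (x : Fin 3 → EuclideanSpace ℝ (Fin 2))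
    (lam : Fin 3 → (EuclideanSpace ℝ (Fin 2) →ᵃ[ℝ] ℝ))
    (hlam : ∀ i j, lam i (x j) = if i = j then 1 else 0)
    (g : Fin 3 → EuclideanSpace ℝ (Fin 2))
    (hg : ∀ i p, lam i p = lam i 0 + ⟪g i, p⟫)
    (i j k : Fin 3) (hij : i ≠ j) (hik : i ≠ k) (hjk : j ≠ k) :
    ∫ p in convexHull ℝ (Set.range x),
        ⟪(6 * lam i p * lam j p) • (x j - x i),
          lam i p • g j - lam j p • g i⟫ =
      2 / 5 * (volume (convexHull ℝ (Set.range x))).toReal := by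
  rw [range_fin_three_eq_of_ne x hij hik hjk, ← image_triangleChart_refTriangle, ← measureReal_def]
  set f := triangleChart (x i) (x j) (x k)
  have hi (u) : lam i (f u) = u 0 := by
    rw [← AffineMap.comp_apply, AffineMap.comp_triangleChart]
    simp [hlam, hij, hik]
  have hj (u) : lam j (f u) = u 1 := by
    rw [← AffineMap.comp_apply, AffineMap.comp_triangleChart]
    simp [hlam, hij.symm, hjk]
  have hinj : InjOn f refTriangle := fun u _ v _ huv => by
    ext m
    fin_cases m
    · simpa [hi] using congrArg (lam i) huv
    · simpa [hj] using congrArg (lam j) huv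
  have hgi : ⟪x j - x i, g i⟫ = -1 := by
    simp [inner_sub_eq_sub_of_eq_add_inner (hg i), hlam, hij]
  have hgj : ⟪x j - x i, g j⟫ = 1 := by
    simp [inner_sub_eq_sub_of_eq_add_inner (hg j), hlam, hij.symm]
  have hintegrand (p) : ⟪(6 * lam i p * lam j p) • (x j - x i), lam i p • g j - lam j p • g i⟫ =
      6 * lam i p * lam j p * (lam i p + lam j p) := by
    simp only [inner_sub_right, real_inner_smul_left, real_inner_smul_right, hgi, hgj]
    ring
  simp only [hintegrand]
  rw [f.setIntegral_image volume measurableSet_refTriangle hinj,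
    f.measureReal_image volume measurableSet_refTriangle hinj, measureReal_refTriangle]
  simp only [hi, hj, smul_eq_mul, integral_refTriangle_mul_mul_add]
  ring

/-- `∫_T ψₖ · φₖ dx = (2/5)|T|`, where `ψₖ = 6 λᵢ λⱼ (xⱼ - xᵢ)` is the edge bubble
field and `φₖ = λᵢ ∇λⱼ - λⱼ ∇λᵢ` the Whitney form on the edge opposite vertex `xₖ`. -/
theorem edge_bubble_whitney_diagonal (x : Fin 3 → EuclideanSpace ℝ (Fin 2))
    (hx : AffineIndependent ℝ x)
    (lam : Fin 3 → (EuclideanSpace ℝ (Fin 2) →ᵃ[ℝ] ℝ))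
    (hlam : ∀ i j, lam i (x j) = if i = j then 1 else 0)
    (g : Fin 3 → EuclideanSpace ℝ (Fin 2))
    (hg : ∀ i p, lam i p = lam i 0 + ⟪g i, p⟫)
    (i j k : Fin 3) (hij : i ≠ j) (hik : i ≠ k) (hjk : j ≠ k) :
    ∫ p in convexHull ℝ (Set.range x),
        ⟪(6 * lam i p * lam j p) • (x j - x i),
          lam i p • g j - lam j p • g i⟫ =
      2 / 5 * (volume (convexHull ℝ (Set.range x))).toReal :=
  edge_bubble_whitney_diagonal_general x lam hlam g hg i j k hij hik hjk
end

section
/- Let T* be a macroelement consisting of triangles T = (x₀, x₁, x₂) and T⁻ = (x₁, x₂, x₃) sharing the edge e = (x₁, x₂). With β = 6|T⁻|/(5|T| + 4|T⁻|), define on T* the piecewise quadratic field ψ₁⁻ = 6λ₁λ₃(x₃ − x₁) + β·(−1)·λ₁λ₂(x₂ − x₁) supported appropriately on T⁻ and T, and let φ₁ be the piecewise linear Nedelec field equal to ∇λ₁ on T and −(λ₁∇λ₂ − λ₂∇λ₁) on T⁻. Then ∫_{T*} ψ₁⁻ · φ₁ dx = 0. -/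
/-!
Both integrands are polynomials in barycentric coordinates: since `⟪x_j - x_k, ∇λ_i⟫ = δ_ij - δ_ik`,
the integrand on `T` is `β λ₁λ₂` and the one on `T⁻ = (x₁, x₂, x₃)` is
`β (ν₀²ν₁ + ν₀ν₁²) - 6 ν₀ν₁ν₂` in its own coordinates `ν`. The affine map taking the reference
triangle `{s, t ≥ 0, s + t ≤ 1}` onto a triangle `K` has Jacobian `2|K|` and pulls `λ` back to
`(1 - s - t, s, t)`, so the reference moments `∫ st = 1/24`, `∫ (1-s-t)s(1-t) = 1/30`,
`∫ (1-s-t)st = 1/120` give `β|T|/12 + β|T⁻|/15 - |T⁻|/10 = (β(5|T| + 4|T⁻|) - 6|T⁻|)/60 = 0`.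
-/

open MeasureTheory Set Pointwise
open scoped RealInnerProductSpace

local notation "ℝ²" => EuclideanSpace ℝ (Fin 2)

theorem setIntegral_prod_eq_integral_fiber {α β E : Type*} [MeasurableSpace α] [MeasurableSpace β]
    [NormedAddCommGroup E] [NormedSpace ℝ E] {μ : Measure α} {ν : Measure β} [SFinite μ] [SFinite ν]
    {s : Set (α × β)} (hs : MeasurableSet s) {g : α × β → E} (hg : IntegrableOn g s (μ.prod ν)) :
    ∫ z in s, g z ∂μ.prod ν = ∫ x, ∫ y in Prod.mk x ⁻¹' s, g (x, y) ∂ν ∂μ := by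
  rw [← integral_indicator hs, integral_prod _ ((integrable_indicator_iff hs).2 hg)]
  refine integral_congr_ae (Filter.Eventually.of_forall fun x => ?_)
  exact integral_indicator (measurable_prodMk_left hs)

theorem integral_quartic (a b c d e u : ℝ) :
    ∫ y in (0:ℝ)..u, (a + b * y + c * y ^ 2 + d * y ^ 3 + e * y ^ 4) =
      a * u + b * u ^ 2 / 2 + c * u ^ 3 / 3 + d * u ^ 4 / 4 + e * u ^ 5 / 5 := by
  have hderiv (y : ℝ) : HasDerivAt
      (fun y => a * y + b * y ^ 2 / 2 + c * y ^ 3 / 3 + d * y ^ 4 / 4 + e * y ^ 5 / 5)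
      (a + b * y + c * y ^ 2 + d * y ^ 3 + e * y ^ 4) y := by
    refine (((((hasDerivAt_id' y).const_mul a).add
      (((hasDerivAt_pow 2 y).const_mul b).div_const 2)).add
      (((hasDerivAt_pow 3 y).const_mul c).div_const 3)).add
      (((hasDerivAt_pow 4 y).const_mul d).div_const 4)).add
      (((hasDerivAt_pow 5 y).const_mul e).div_const 5) |>.congr_deriv ?_
    norm_num
    ring
  rw [intervalIntegral.integral_eq_sub_of_hasDerivAt (fun y _ => hderiv y)
    (Continuous.intervalIntegrable (by fun_prop) _ _)]
  ring

def stdTriangle : Set (ℝ × ℝ) := {q | 0 ≤ q.1 ∧ 0 ≤ q.2 ∧ q.1 + q.2 ≤ 1}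

theorem isCompact_stdTriangle : IsCompact stdTriangle := by
  refine (isCompact_Icc (a := ((0 : ℝ), (0 : ℝ))) (b := (1, 1))).of_isClosed_subset ?_ ?_
  · exact (isClosed_le continuous_const continuous_fst).inter
      ((isClosed_le continuous_const continuous_snd).inter
        (isClosed_le (continuous_fst.add continuous_snd) continuous_const))
  · rintro ⟨x, y⟩ ⟨hx, hy, hxy⟩
    exact ⟨⟨hx, hy⟩, by constructor <;> dsimp at * <;> linarith⟩

theorem measurableSet_stdTriangle : MeasurableSet stdTriangle :=
  isCompact_stdTriangle.isClosed.measurableSet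

theorem convex_stdTriangle : Convex ℝ stdTriangle := by
  rintro ⟨x, y⟩ ⟨hx, hy, hxy⟩ ⟨x', y'⟩ ⟨hx', hy', hxy'⟩ a b ha hb hab
  refine ⟨?_, ?_, ?_⟩ <;> dsimp at * <;> nlinarith

theorem setIntegral_stdTriangle {g : ℝ × ℝ → ℝ} (hg : Continuous g) :
    ∫ q in stdTriangle, g q = ∫ x in (0:ℝ)..1, ∫ y in (0:ℝ)..(1 - x), g (x, y) := by
  have hfiber (x : ℝ) : Prod.mk x ⁻¹' stdTriangle = if x ∈ Icc 0 1 then Icc 0 (1 - x) else ∅ := by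
    ext y
    split_ifs with hx
    · simp only [stdTriangle, mem_preimage, mem_ofPred_eq, mem_Icc] at hx ⊢
      constructor
      · rintro ⟨-, hy, hxy⟩; exact ⟨hy, by linarith⟩
      · rintro ⟨hy, hxy⟩; exact ⟨hx.1, hy, by linarith⟩
    · simp only [stdTriangle, mem_preimage, mem_ofPred_eq, mem_Icc, not_and_or, not_le] at hx ⊢
      simp only [mem_empty_iff_false, iff_false]
      rintro ⟨h0, hy, hxy⟩; rcases hx with hx | hx <;> linarith
  have hinner (x : ℝ) : ∫ y in Prod.mk x ⁻¹' stdTriangle, g (x, y) =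
      (Icc 0 1).indicator (fun x => ∫ y in (0:ℝ)..(1 - x), g (x, y)) x := by
    rw [hfiber]
    split_ifs with hx
    · rw [indicator_of_mem hx, integral_Icc_eq_integral_Ioc,
        ← intervalIntegral.integral_of_le (by linarith [hx.2])]
    · rw [indicator_of_notMem hx, Measure.restrict_empty, integral_zero_measure]
  rw [Measure.volume_eq_prod, setIntegral_prod_eq_integral_fiber measurableSet_stdTriangle
      (by rw [← Measure.volume_eq_prod]
          exact hg.continuousOn.integrableOn_compact isCompact_stdTriangle)]
  simp_rw [hinner]
  rw [integral_indicator measurableSet_Icc, integral_Icc_eq_integral_Ioc,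
    ← intervalIntegral.integral_of_le zero_le_one]

theorem volume_real_stdTriangle : volume.real stdTriangle = 1 / 2 := by
  have h := setIntegral_stdTriangle (g := fun _ => (1 : ℝ)) continuous_const
  rw [setIntegral_const, smul_eq_mul, mul_one] at h
  rw [h]
  simp only [intervalIntegral.integral_const, sub_zero, smul_eq_mul, mul_one]
  rw [intervalIntegral.integral_sub (by simp) (by simp)]
  norm_num

theorem setIntegral_stdTriangle_mul : ∫ q in stdTriangle, q.1 * q.2 = 1 / 24 := by
  rw [setIntegral_stdTriangle (by fun_prop)]
  have hinner (x : ℝ) : ∫ y in (0:ℝ)..(1 - x), x * y =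
      0 + (1 / 2) * x + (-1) * x ^ 2 + (1 / 2) * x ^ 3 + 0 * x ^ 4 := by
    rw [intervalIntegral.integral_congr
      (g := fun y => 0 + x * y + 0 * y ^ 2 + 0 * y ^ 3 + 0 * y ^ 4) (fun y _ => by ring),
      integral_quartic]
    ring
  simp_rw [hinner]
  rw [integral_quartic]
  norm_num

theorem setIntegral_stdTriangle_cubic (β : ℝ) :
    ∫ q in stdTriangle, (β * ((1 - q.1 - q.2) ^ 2 * q.1 + (1 - q.1 - q.2) * q.1 ^ 2) -
      6 * ((1 - q.1 - q.2) * q.1 * q.2)) = β / 30 - 1 / 20 := by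
  rw [setIntegral_stdTriangle (by fun_prop)]
  have hinner (x : ℝ) : ∫ y in (0:ℝ)..(1 - x), (β * ((1 - x - y) ^ 2 * x + (1 - x - y) * x ^ 2) -
      6 * ((1 - x - y) * x * y)) =
      0 + (β / 3 - 1) * x + (3 - β / 2) * x ^ 2 + (-3) * x ^ 3 + (β / 6 + 1) * x ^ 4 := by
    rw [intervalIntegral.integral_congr (g := fun y => β * (x - x ^ 2) +
        (β * (-2 * x + x ^ 2) + (-6 * x + 6 * x ^ 2)) * y + (β * x + 6 * x) * y ^ 2 +
        0 * y ^ 3 + 0 * y ^ 4) (fun y _ => by ring), integral_quartic]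
    ring
  simp_rw [hinner]
  rw [integral_quartic]
  ring

noncomputable def toProd : ℝ² ≃ᵐ ℝ × ℝ :=
  (MeasurableEquiv.toLp 2 (Fin 2 → ℝ)).symm.trans MeasurableEquiv.finTwoArrow

theorem toProd_apply (p : ℝ²) : toProd p = (p 0, p 1) := rfl

theorem measurePreserving_toProd : MeasurePreserving toProd :=
  (volume_preserving_finTwoArrow ℝ).comp
    (EuclideanSpace.volume_preserving_symm_measurableEquiv_toLp (Fin 2))

theorem convex_preimage_toProd_stdTriangle : Convex ℝ (toProd ⁻¹' stdTriangle) :=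
  convex_stdTriangle.is_linear_preimage ⟨fun _ _ => rfl, fun _ _ => rfl⟩

theorem setIntegral_preimage_toProd_stdTriangle (f : ℝ × ℝ → ℝ) :
    ∫ p in toProd ⁻¹' stdTriangle, f (toProd p) = ∫ q in stdTriangle, f q :=
  measurePreserving_toProd.setIntegral_preimage_emb toProd.measurableEmbedding f stdTriangle

theorem AffineIndependent.measure_convexHull_pos {E ι : Type*} [NormedAddCommGroup E]
    [NormedSpace ℝ E] [FiniteDimensional ℝ E] [MeasurableSpace E] [BorelSpace E] (μ : Measure E)
    [μ.IsAddHaarMeasure] [Fintype ι] {v : ι → E} (hv : AffineIndependent ℝ v)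
    (hcard : Fintype.card ι = Module.finrank ℝ E + 1) : 0 < μ (convexHull ℝ (range v)) :=
  Measure.measure_pos_of_nonempty_interior μ <|
    interior_convexHull_nonempty_iff_affineSpan_eq_top.2 <|
      hv.affineSpan_eq_top_iff_card_eq_finrank_add_one.2 hcard

section Triangle

variable (v0 v1 v2 : ℝ²)

noncomputable def triangleLinear : ℝ² →L[ℝ] ℝ² :=
  (EuclideanSpace.proj 0).smulRight (v1 - v0) + (EuclideanSpace.proj 1).smulRight (v2 - v0)

theorem triangleLinear_apply (p : ℝ²) :
    triangleLinear v0 v1 v2 p = p 0 • (v1 - v0) + p 1 • (v2 - v0) := rfl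

theorem AffineMap.apply_add_triangleLinear (φ : ℝ² →ᵃ[ℝ] ℝ) (p : ℝ²) :
    φ (v0 + triangleLinear v0 v1 v2 p) = (1 - p 0 - p 1) * φ v0 + p 0 * φ v1 + p 1 * φ v2 := by
  have hdiff (v : ℝ²) : φ.linear (v - v0) = φ v - φ v0 := φ.linearMap_vsub v v0
  rw [add_comm, ← vadd_eq_add, φ.map_vadd, triangleLinear_apply, map_add, map_smul, map_smul,
    hdiff, hdiff, vadd_eq_add, smul_eq_mul, smul_eq_mul]
  ring

theorem image_add_triangleLinear_eq_vadd (s : Set ℝ²) :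
    (v0 + triangleLinear v0 v1 v2 ·) '' s = v0 +ᵥ triangleLinear v0 v1 v2 '' s := by
  rw [← image_vadd, image_image]
  rfl

theorem image_add_triangleLinear_stdTriangle :
    (v0 + triangleLinear v0 v1 v2 ·) '' (toProd ⁻¹' stdTriangle) = convexHull ℝ {v0, v1, v2} := by
  apply Subset.antisymm
  · rintro _ ⟨p, ⟨hp0, hp1, hp01⟩, rfl⟩
    simp only [toProd_apply] at hp0 hp1 hp01
    have hcomb : v0 + triangleLinear v0 v1 v2 p =
        ∑ i, ![1 - p 0 - p 1, p 0, p 1] i • ![v0, v1, v2] i := by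
      simp only [Fin.sum_univ_three, triangleLinear_apply, Matrix.cons_val_zero,
        Matrix.cons_val_one, Matrix.cons_val]
      module
    dsimp only
    rw [hcomb]
    refine (convex_convexHull ℝ _).sum_mem (fun i _ => ?_) ?_ (fun i _ => subset_convexHull ℝ _ ?_)
    · fin_cases i <;> simp only [Fin.zero_eta, Fin.mk_one, Fin.reduceFinMk, Matrix.cons_val_zero,
        Matrix.cons_val_one, Matrix.cons_val] <;> linarith
    · simp only [Fin.sum_univ_three, Matrix.cons_val_zero, Matrix.cons_val_one, Matrix.cons_val]
      ring
    · fin_cases i <;> simp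
  · refine convexHull_min ?_ ?_
    · rintro _ (rfl | rfl | rfl)
      · exact ⟨!₂[0, 0], by simp [stdTriangle, toProd_apply], by simp [triangleLinear_apply]⟩
      · exact ⟨!₂[1, 0], by simp [stdTriangle, toProd_apply], by simp [triangleLinear_apply]⟩
      · exact ⟨!₂[0, 1], by simp [stdTriangle, toProd_apply], by simp [triangleLinear_apply]⟩
    · rw [image_add_triangleLinear_eq_vadd]
      exact (convex_preimage_toProd_stdTriangle.linear_image _).vadd v0

theorem volume_convexHull_triangle :
    (volume (convexHull ℝ {v0, v1, v2})).toReal = |(triangleLinear v0 v1 v2).det| / 2 := by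
  rw [← image_add_triangleLinear_stdTriangle, image_add_triangleLinear_eq_vadd, measure_vadd,
    Measure.addHaar_image_continuousLinearMap,
    measurePreserving_toProd.measure_preimage measurableSet_stdTriangle.nullMeasurableSet,
    ENNReal.toReal_mul, ENNReal.toReal_ofReal (abs_nonneg _), ← measureReal_def,
    volume_real_stdTriangle]
  ring

theorem setIntegral_convexHull_triangle {lam : Fin 3 → ℝ² →ᵃ[ℝ] ℝ}
    (hlam : ∀ i j, lam i (![v0, v1, v2] j) = if i = j then 1 else 0) (f : ℝ → ℝ → ℝ → ℝ) :
    ∫ p in convexHull ℝ {v0, v1, v2}, f (lam 0 p) (lam 1 p) (lam 2 p) =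
      2 * (volume (convexHull ℝ {v0, v1, v2})).toReal *
        ∫ q in stdTriangle, f (1 - q.1 - q.2) q.1 q.2 := by
  set L := triangleLinear v0 v1 v2
  have hbary (i : Fin 3) (p : ℝ²) : lam i (v0 + L p) = ![1 - p 0 - p 1, p 0, p 1] i := by
    have h0 : lam i v0 = _ := hlam i 0
    have h1 : lam i v1 = _ := hlam i 1
    have h2 : lam i v2 = _ := hlam i 2
    rw [AffineMap.apply_add_triangleLinear, h0, h1, h2]
    fin_cases i <;> simp
  have hinj : InjOn (v0 + L ·) (toProd ⁻¹' stdTriangle) := by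
    intro p _ q _ hpq
    have h1 := congrArg (lam 1) hpq
    have h2 := congrArg (lam 2) hpq
    simp only [hbary] at h1 h2
    ext i
    fin_cases i
    · simpa using h1
    · simpa using h2
  rw [volume_convexHull_triangle, ← image_add_triangleLinear_stdTriangle,
    integral_image_eq_integral_abs_det_fderiv_smul volume
      (measurableSet_stdTriangle.preimage toProd.measurable)
      (fun p _ => (L.hasFDerivAt.const_add v0).hasFDerivWithinAt) hinj]
  simp only [hbary, smul_eq_mul]
  rw [integral_const_mul, mul_div_cancel₀ _ two_ne_zero]
  congr 1
  exact setIntegral_preimage_toProd_stdTriangle (fun q => f (1 - q.1 - q.2) q.1 q.2)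

theorem toReal_volume_convexHull_triangle_pos (h : AffineIndependent ℝ ![v0, v1, v2]) :
    0 < (volume (convexHull ℝ {v0, v1, v2})).toReal := by
  refine ENNReal.toReal_pos (ne_of_gt ?_)
    ((Set.toFinite _).isCompact_convexHull ℝ).measure_lt_top.ne
  simpa only [Matrix.range_cons, Matrix.range_empty, union_empty, singleton_union] using
    h.measure_convexHull_pos volume (by simp)

end Triangle

theorem inner_sub_gradient_barycentric {E ι : Type*} [NormedAddCommGroup E]
    [InnerProductSpace ℝ E] [DecidableEq ι] {v : ι → E} {lam : ι → E → ℝ} {g : ι → E}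
    (hlam : ∀ i j, lam i (v j) = if i = j then 1 else 0) (hg : ∀ i p, lam i p = lam i 0 + ⟪g i, p⟫)
    (i j k : ι) : ⟪v j - v k, g i⟫ = (if i = j then 1 else 0) - (if i = k then 1 else 0) := by
  rw [← hlam, ← hlam, real_inner_comm, inner_sub_right, hg i (v j), hg i (v k)]
  ring

theorem setIntegral_psi_inner_phi_T (x0 x1 x2 : ℝ²) {μ : Fin 3 → ℝ² →ᵃ[ℝ] ℝ}
    (hμ : ∀ i j, μ i (![x0, x1, x2] j) = if i = j then 1 else 0) {gT : Fin 3 → ℝ²}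
    (hgT : ∀ i p, μ i p = μ i 0 + ⟪gT i, p⟫) (β : ℝ) :
    ∫ p in convexHull ℝ {x0, x1, x2}, ⟪(-(β * μ 1 p * μ 2 p)) • (x2 - x1), gT 1⟫ =
      β * (volume (convexHull ℝ {x0, x1, x2})).toReal / 12 := by
  have h21 : ⟪x2 - x1, gT 1⟫ = -1 := by
    simpa using inner_sub_gradient_barycentric (lam := fun i => μ i) hμ hgT 1 2 1
  have hpointwise (p : ℝ²) :
      ⟪(-(β * μ 1 p * μ 2 p)) • (x2 - x1), gT 1⟫ = β * (μ 1 p * μ 2 p) := by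
    rw [real_inner_smul_left, h21]
    ring
  simp_rw [hpointwise]
  rw [setIntegral_convexHull_triangle x0 x1 x2 hμ (fun _ b c => β * (b * c)), integral_const_mul,
    setIntegral_stdTriangle_mul]
  ring

theorem setIntegral_psi_inner_phi_Tminus (x1 x2 x3 : ℝ²) {ν : Fin 3 → ℝ² →ᵃ[ℝ] ℝ}
    (hν : ∀ i j, ν i (![x1, x2, x3] j) = if i = j then 1 else 0) {gN : Fin 3 → ℝ²}
    (hgN : ∀ i p, ν i p = ν i 0 + ⟪gN i, p⟫) (β : ℝ) :
    ∫ p in convexHull ℝ {x1, x2, x3},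
        ⟪(6 * ν 0 p * ν 2 p) • (x3 - x1) - (β * ν 0 p * ν 1 p) • (x2 - x1),
          -(ν 0 p • gN 1 - ν 1 p • gN 0)⟫ =
      (β / 15 - 1 / 10) * (volume (convexHull ℝ {x1, x2, x3})).toReal := by
  have hgrad (i j : Fin 3) := inner_sub_gradient_barycentric (lam := fun i => ν i) hν hgN i j 0
  have h30 : ⟪x3 - x1, gN 0⟫ = -1 := by simpa using hgrad 0 2
  have h31 : ⟪x3 - x1, gN 1⟫ = 0 := by simpa using hgrad 1 2
  have h20 : ⟪x2 - x1, gN 0⟫ = -1 := by simpa using hgrad 0 1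
  have h21 : ⟪x2 - x1, gN 1⟫ = 1 := by simpa using hgrad 1 1
  have hpointwise (p : ℝ²) : ⟪(6 * ν 0 p * ν 2 p) • (x3 - x1) - (β * ν 0 p * ν 1 p) • (x2 - x1),
      -(ν 0 p • gN 1 - ν 1 p • gN 0)⟫ =
      β * (ν 0 p ^ 2 * ν 1 p + ν 0 p * ν 1 p ^ 2) - 6 * (ν 0 p * ν 1 p * ν 2 p) := by
    simp only [inner_sub_left, inner_neg_right, inner_sub_right, real_inner_smul_left,
      real_inner_smul_right, h30, h31, h20, h21]
    ring
  simp_rw [hpointwise]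
  rw [setIntegral_convexHull_triangle x1 x2 x3 hν
      (fun a b c => β * (a ^ 2 * b + a * b ^ 2) - 6 * (a * b * c)), setIntegral_stdTriangle_cubic]
  ring

theorem macroelement_orthogonality_general (x0 x1 x2 x3 : EuclideanSpace ℝ (Fin 2))
    (hT' : AffineIndependent ℝ ![x1, x2, x3])
    (μ ν : Fin 3 → (EuclideanSpace ℝ (Fin 2) →ᵃ[ℝ] ℝ))
    (hμ : ∀ i j, μ i (![x0, x1, x2] j) = if i = j then 1 else 0)
    (hν : ∀ i j, ν i (![x1, x2, x3] j) = if i = j then 1 else 0)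
    (gT gN : Fin 3 → EuclideanSpace ℝ (Fin 2))
    (hgT : ∀ i p, μ i p = μ i 0 + ⟪gT i, p⟫)
    (hgN : ∀ i p, ν i p = ν i 0 + ⟪gN i, p⟫)
    (β : ℝ)
    (hβ : β = 6 * (volume (convexHull ℝ ({x1, x2, x3} : Set _))).toReal /
      (5 * (volume (convexHull ℝ ({x0, x1, x2} : Set _))).toReal +
        4 * (volume (convexHull ℝ ({x1, x2, x3} : Set _))).toReal)) :
    (∫ p in convexHull ℝ ({x0, x1, x2} : Set _),
        ⟪(-(β * μ 1 p * μ 2 p)) • (x2 - x1), gT 1⟫) +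
      (∫ p in convexHull ℝ ({x1, x2, x3} : Set _),
        ⟪(6 * ν 0 p * ν 2 p) • (x3 - x1) - (β * ν 0 p * ν 1 p) • (x2 - x1),
          -(ν 0 p • gN 1 - ν 1 p • gN 0)⟫) = 0 := by
  rw [setIntegral_psi_inner_phi_T x0 x1 x2 hμ hgT, setIntegral_psi_inner_phi_Tminus x1 x2 x3 hν hgN]
  have hareaN := toReal_volume_convexHull_triangle_pos x1 x2 x3 hT'
  set areaT := (volume (convexHull ℝ ({x0, x1, x2} : Set ℝ²))).toReal
  set areaN := (volume (convexHull ℝ ({x1, x2, x3} : Set ℝ²))).toReal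
  have hβ' : β * (5 * areaT + 4 * areaN) = 6 * areaN := by
    rw [hβ, div_mul_cancel₀]
    have : 0 ≤ areaT := ENNReal.toReal_nonneg
    positivity
  linear_combination hβ' / 60

/-- Orthogonality on the macroelement `T* = T ∪ T⁻`: with
`β = 6|T⁻|/(5|T| + 4|T⁻|)`, the field `ψ₁⁻` (equal to `-βλ₁λ₂(x₂-x₁)` on `T` and to
`6λ₁λ₃(x₃-x₁) - βλ₁λ₂(x₂-x₁)` on `T⁻`) is orthogonal to the piecewise Nedelec field
`φ₁` (equal to `∇λ₁` on `T` and `-(λ₁∇λ₂ - λ₂∇λ₁)` on `T⁻`):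
`∫_{T*} ψ₁⁻ · φ₁ dx = 0`.  Here `μ` are the barycentric coordinates of
`T = (x₀,x₁,x₂)` and `ν` those of `T⁻ = (x₁,x₂,x₃)`, with gradients `gT`, `gN`. -/
theorem macroelement_orthogonality (x0 x1 x2 x3 : EuclideanSpace ℝ (Fin 2))
    (hT : AffineIndependent ℝ ![x0, x1, x2])
    (hT' : AffineIndependent ℝ ![x1, x2, x3])
    (μ ν : Fin 3 → (EuclideanSpace ℝ (Fin 2) →ᵃ[ℝ] ℝ))
    (hμ : ∀ i j, μ i (![x0, x1, x2] j) = if i = j then 1 else 0)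
    (hν : ∀ i j, ν i (![x1, x2, x3] j) = if i = j then 1 else 0)
    (gT gN : Fin 3 → EuclideanSpace ℝ (Fin 2))
    (hgT : ∀ i p, μ i p = μ i 0 + ⟪gT i, p⟫)
    (hgN : ∀ i p, ν i p = ν i 0 + ⟪gN i, p⟫)
    (β : ℝ)
    (hβ : β = 6 * (volume (convexHull ℝ ({x1, x2, x3} : Set _))).toReal /
      (5 * (volume (convexHull ℝ ({x0, x1, x2} : Set _))).toReal +
        4 * (volume (convexHull ℝ ({x1, x2, x3} : Set _))).toReal)) :
    (∫ p in convexHull ℝ ({x0, x1, x2} : Set _),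
        ⟪(-(β * μ 1 p * μ 2 p)) • (x2 - x1), gT 1⟫) +
      (∫ p in convexHull ℝ ({x1, x2, x3} : Set _),
        ⟪(6 * ν 0 p * ν 2 p) • (x3 - x1) - (β * ν 0 p * ν 1 p) • (x2 - x1),
          -(ν 0 p • gN 1 - ν 1 p • gN 0)⟫) = 0 :=
  macroelement_orthogonality_general x0 x1 x2 x3 hT' μ ν hμ hν gT gN hgT hgN β hβ
end

section
/- Let H be a real inner product space, V_b and Z finite-dimensional subspaces-type setup: suppose for every v ∈ V_b there exists z ∈ Z with ⟨v, z⟩ ≥ c₀ ‖v‖ ‖z‖ and z ≠ 0 (for v ≠ 0). If Π_b : H → V_b is the linear operator defined by ⟨Π_b u, z⟩ = ⟨u, z⟩ for all z ∈ Z (assumed well-defined), then ‖Π_b u‖ ≤ c₀⁻¹ ‖u‖ for all u ∈ H. -/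
open scoped RealInnerProductSpace

/-- If the inf-sup condition `sup_{z ∈ Z, z ≠ 0} ⟨v,z⟩/‖z‖ ≥ c₀‖v‖` holds for all
`v ∈ V_b` and `Π_b : H → V_b` satisfies `⟨Π_b u, z⟩ = ⟨u, z⟩` for all `z ∈ Z`, then
`‖Π_b u‖ ≤ c₀⁻¹‖u‖` for all `u`. -/
theorem projection_L2_bound (H : Type*)
    [NormedAddCommGroup H] [InnerProductSpace ℝ H]
    (Vb Z : Submodule ℝ H) (c₀ : ℝ) (hc₀ : 0 < c₀)
    (hinfsup : ∀ v ∈ Vb, v ≠ 0 → ∃ z ∈ Z, z ≠ 0 ∧ c₀ * ‖v‖ * ‖z‖ ≤ ⟪v, z⟫)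
    (Pb : H →ₗ[ℝ] H) (hmem : ∀ u, Pb u ∈ Vb)
    (hdef : ∀ u : H, ∀ z ∈ Z, ⟪Pb u, z⟫ = ⟪u, z⟫) :
    ∀ u : H, ‖Pb u‖ ≤ c₀⁻¹ * ‖u‖ := by
  intro u
  by_cases h0 : Pb u = 0
  · rw [h0, norm_zero]
    positivity
  · obtain ⟨z, hzZ, hz0, hle⟩ := hinfsup (Pb u) (hmem u) h0
    have hz : (0:ℝ) < ‖z‖ := norm_pos_iff.mpr hz0
    have h1 : ⟪Pb u, z⟫ ≤ ‖u‖ * ‖z‖ := by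
      rw [hdef u z hzZ]
      exact real_inner_le_norm u z
    have h2 : c₀ * ‖Pb u‖ * ‖z‖ ≤ ‖u‖ * ‖z‖ := hle.trans h1
    have h3 : c₀ * ‖Pb u‖ ≤ ‖u‖ := le_of_mul_le_mul_right h2 hz
    rw [inv_mul_eq_div, le_div_iff₀ hc₀]
    linarith
end
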